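/- Fix an integer p ≥ 3, a constant C > 0 and β > 0, and define ξ₀(r) = r²/2 + (C r)^p/p and, for q ∈ [0,1], F_RS(q,β) = E[log cosh(β·√(ξ₀'(q))·Z)] + (β²/2)·(ξ₀(1) − ξ₀(q) − (1−q)·ξ₀'(q)), where Z is a standard Gaussian random variable. Then F_RS(0,β) = (β²/2)·ξ₀(1), and as q → 0⁺, F_RS(q,β) − F_RS(0,β) = (β²/4)·(1−β²)·q² + o(q²); precisely, (F_RS(q,β) − (β²/2)ξ₀(1) − (β²/4)(1−β²)q²)/q² tends to 0 as q tends to 0 from the right. -/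

import Mathlib

/-!
Since `ξ₀'(q) = q + C^p q^(p-1)`, the Gaussian term is `E[log cosh(s Z)]` with
`s² = β² ξ₀'(q) = O(q)`. Integrating `x - x³/3 ≤ tanh x ≤ x - x³/3 + 2x⁵/15`
(for `x ≥ 0`) sandwiches `log cosh x` between `x²/2 - x⁴/12` and
`x²/2 - x⁴/12 + x⁶/45`, so the moments `E Z² = 1`, `E Z⁴ = 3`, `E Z⁶ = 15` give
`E[log cosh(s Z)] = s²/2 - s⁴/4 + O(s⁶)`, and `O(s⁶) = o(q²)`. What remains is a
polynomial in `q` whose `q²` coefficient is `(β²/4)(1 - β²)` and whose other terms have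
degree at least `p ≥ 3`.
-/
open Real Filter MeasureTheory ProbabilityTheory Set Topology
open scoped NNReal Nat

lemma le_of_hasDerivAt_le {f g f' g' : ℝ → ℝ} {a : ℝ}
    (hf : ∀ x, a ≤ x → HasDerivAt f (f' x) x) (hg : ∀ x, a ≤ x → HasDerivAt g (g' x) x)
    (ha : f a ≤ g a) (hle : ∀ x, a < x → f' x ≤ g' x) {x : ℝ} (hx : a ≤ x) :
    f x ≤ g x := by
  have hmono : MonotoneOn (g - f) (Ici a) := by
    refine monotoneOn_of_hasDerivWithinAt_nonneg (f' := g' - f') (convex_Ici a)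
      (fun y hy => ((hg y hy).fun_sub (hf y hy)).continuousAt.continuousWithinAt)
      (fun y hy => ?_) (fun y hy => ?_)
    · rw [interior_Ici] at hy
      exact ((hg y (le_of_lt hy)).fun_sub (hf y (le_of_lt hy))).hasDerivWithinAt
    · rw [interior_Ici] at hy
      exact sub_nonneg.2 (hle y hy)
  have := hmono self_mem_Ici hx hx
  simp only [Pi.sub_apply] at this
  linarith

lemma hasDerivAt_tanh (x : ℝ) : HasDerivAt tanh (1 - tanh x ^ 2) x := by
  have h := (hasDerivAt_sinh x).div (hasDerivAt_cosh x) (cosh_pos x).ne'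
  rw [show tanh = sinh / cosh from funext tanh_eq_sinh_div_cosh]
  refine h.congr_deriv ?_
  simp only [Pi.div_apply]
  field_simp

lemma tanh_nonneg {x : ℝ} (hx : 0 ≤ x) : 0 ≤ tanh x := by
  rw [tanh_eq_sinh_div_cosh]
  exact div_nonneg (sinh_nonneg_iff.2 hx) (cosh_pos x).le

lemma tanh_le_self {x : ℝ} (hx : 0 ≤ x) : tanh x ≤ x :=
  le_of_hasDerivAt_le (fun y _ => hasDerivAt_tanh y) (fun y _ => hasDerivAt_id y)
    (by simp) (fun y _ => by simp [sq_nonneg]) hx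

lemma tanh_lower_bound {x : ℝ} (hx : 0 ≤ x) : x - x ^ 3 / 3 ≤ tanh x := by
  refine le_of_hasDerivAt_le (f := fun y => y - y ^ 3 / 3) (f' := fun y => 1 - y ^ 2)
    (fun y _ => ?_) (fun y _ => hasDerivAt_tanh y) (by simp) (fun y hy => ?_) hx
  · simpa using (hasDerivAt_id' y).fun_sub ((hasDerivAt_pow 3 y).div_const 3)
  · have := tanh_le_self hy.le
    have := tanh_nonneg hy.le
    nlinarith

lemma tanh_upper_bound {x : ℝ} (hx : 0 ≤ x) : tanh x ≤ x - x ^ 3 / 3 + 2 * x ^ 5 / 15 := by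
  refine le_of_hasDerivAt_le (g := fun y => y - y ^ 3 / 3 + 2 * y ^ 5 / 15)
    (g' := fun y => 1 - y ^ 2 + 2 * y ^ 4 / 3)
    (fun y _ => hasDerivAt_tanh y) (fun y _ => ?_) (by simp) (fun y hy => ?_) hx
  · refine (((hasDerivAt_id' y).fun_sub ((hasDerivAt_pow 3 y).div_const 3)).fun_add
      (((hasDerivAt_pow 5 y).const_mul 2).div_const 15)).congr_deriv ?_
    push_cast; ring
  · show 1 - tanh y ^ 2 ≤ 1 - y ^ 2 + 2 * y ^ 4 / 3
    -- `tanh y ≥ y - y³/3 ≥ 0` may be squared while `y² ≤ 3`; beyond that `2y⁴/3 ≥ 2y²`.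
    rcases le_or_gt (y ^ 2) 3 with hy3 | hy3
    · have h0 : 0 ≤ y - y ^ 3 / 3 := by nlinarith
      have := pow_le_pow_left₀ h0 (tanh_lower_bound hy.le) 2
      nlinarith [pow_nonneg (sq_nonneg y) 3]
    · nlinarith [sq_nonneg (tanh y)]

lemma hasDerivAt_log_cosh (x : ℝ) : HasDerivAt (fun y => log (cosh y)) (tanh x) x := by
  simpa [← tanh_eq_sinh_div_cosh] using (hasDerivAt_cosh x).log (cosh_pos x).ne'

lemma log_cosh_le_sq_div_two (x : ℝ) : log (cosh x) ≤ x ^ 2 / 2 := by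
  have key : ∀ y, 0 ≤ y → log (cosh y) ≤ y ^ 2 / 2 := fun y hy =>
    le_of_hasDerivAt_le (fun z _ => hasDerivAt_log_cosh z)
      (fun z _ => by simpa using (hasDerivAt_pow 2 z).div_const 2) (by simp)
      (fun z hz => tanh_le_self hz.le) hy
  rcases le_total 0 x with hx | hx
  · exact key x hx
  · simpa using key (-x) (neg_nonneg.2 hx)

lemma log_cosh_lower_bound (x : ℝ) : x ^ 2 / 2 - x ^ 4 / 12 ≤ log (cosh x) := by
  have key : ∀ y, 0 ≤ y → y ^ 2 / 2 - y ^ 4 / 12 ≤ log (cosh y) := fun y hy => by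
    refine le_of_hasDerivAt_le (f := fun z => z ^ 2 / 2 - z ^ 4 / 12)
      (f' := fun z => z - z ^ 3 / 3) (fun z _ => ?_) (fun z _ => hasDerivAt_log_cosh z) (by simp)
      (fun z hz => tanh_lower_bound hz.le) hy
    refine (((hasDerivAt_pow 2 z).div_const 2).fun_sub
      ((hasDerivAt_pow 4 z).div_const 12)).congr_deriv ?_
    push_cast; ring
  rcases le_total 0 x with hx | hx
  · exact key x hx
  · simpa [Even.neg_pow (by decide : Even 4)] using key (-x) (neg_nonneg.2 hx)

lemma log_cosh_upper_bound (x : ℝ) : log (cosh x) ≤ x ^ 2 / 2 - x ^ 4 / 12 + x ^ 6 / 45 := by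
  have key : ∀ y, 0 ≤ y → log (cosh y) ≤ y ^ 2 / 2 - y ^ 4 / 12 + y ^ 6 / 45 := fun y hy => by
    refine le_of_hasDerivAt_le (g := fun z => z ^ 2 / 2 - z ^ 4 / 12 + z ^ 6 / 45)
      (g' := fun z => z - z ^ 3 / 3 + 2 * z ^ 5 / 15)
      (fun z _ => hasDerivAt_log_cosh z) (fun z _ => ?_) (by simp)
      (fun z hz => tanh_upper_bound hz.le) hy
    refine ((((hasDerivAt_pow 2 z).div_const 2).fun_sub
      ((hasDerivAt_pow 4 z).div_const 12)).fun_add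
      ((hasDerivAt_pow 6 z).div_const 45)).congr_deriv ?_
    push_cast; ring
  rcases le_total 0 x with hx | hx
  · exact key x hx
  · simpa [Even.neg_pow (by decide : Even 4), Even.neg_pow (by decide : Even 6)]
      using key (-x) (neg_nonneg.2 hx)

lemma hasDerivAt_gaussianPDFReal (μ : ℝ) (v : ℝ≥0) (x : ℝ) :
    HasDerivAt (gaussianPDFReal μ v) (-(x - μ) / v * gaussianPDFReal μ v x) x := by
  have hexp : HasDerivAt (fun y => -(y - μ) ^ 2 / (2 * v)) (-(x - μ) / v) x := by
    refine ((((hasDerivAt_id' x).sub_const μ).pow 2).neg.div_const (2 * (v : ℝ))).congr_deriv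
      ?_
    by_cases hv : (v : ℝ) = 0
    · simp [hv]
    · field_simp; ring
  refine (hexp.exp.const_mul (√(2 * π * v))⁻¹).congr_deriv ?_
  rw [gaussianPDFReal]; ring

lemma integrable_gaussianReal_iff {μ : ℝ} {v : ℝ≥0} (hv : v ≠ 0) {f : ℝ → ℝ} :
    Integrable f (gaussianReal μ v) ↔ Integrable (fun x => gaussianPDFReal μ v x * f x) := by
  rw [gaussianReal_of_var_ne_zero μ hv, integrable_withDensity_iff_integrable_smul'
    (measurable_gaussianPDF μ v) (ae_of_all _ fun _ => gaussianPDF_lt_top)]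
  simp

lemma integrable_pow_gaussianReal (μ : ℝ) (v : ℝ≥0) (n : ℕ) :
    Integrable (fun x => x ^ n) (gaussianReal μ v) :=
  integrable_pow_of_mem_interior_integrableExpSet (X := fun x => x) (by simp) n

lemma integral_pow_add_two_gaussianReal (v : ℝ≥0) (n : ℕ) :
    ∫ x, x ^ (n + 2) ∂gaussianReal 0 v = (n + 1) * v * ∫ x, x ^ n ∂gaussianReal 0 v := by
  rcases eq_or_ne v 0 with rfl | hv
  · simp
  have hint : ∀ k : ℕ, Integrable fun x => gaussianPDFReal 0 v x * x ^ k := fun k =>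
    (integrable_gaussianReal_iff hv).1 (integrable_pow_gaussianReal 0 v k)
  have hparts := integral_mul_deriv_eq_deriv_mul_of_integrable (u := fun x => x ^ (n + 1))
    (u' := fun x => (n + 1 : ℝ) * x ^ n) (v := gaussianPDFReal 0 v)
    (v' := fun x => -(x - 0) / v * gaussianPDFReal 0 v x)
    (fun x _ => by simpa using hasDerivAt_pow (n + 1) x)
    (fun x _ => hasDerivAt_gaussianPDFReal 0 v x)
    (((hint (n + 2)).const_mul (-1 / v : ℝ)).congr (ae_of_all _ fun x => by simp; ring))
    (((hint n).const_mul (n + 1 : ℝ)).congr (ae_of_all _ fun x => by simp; ring))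
    ((hint (n + 1)).congr (ae_of_all _ fun x => by simp; ring))
  simp only [integral_gaussianReal_eq_integral_smul hv, smul_eq_mul]
  have hv' : (v : ℝ) ≠ 0 := by exact_mod_cast hv
  calc ∫ x, gaussianPDFReal 0 v x * x ^ (n + 2)
      = -v * ∫ x, x ^ (n + 1) * (-(x - 0) / v * gaussianPDFReal 0 v x) := by
        rw [← integral_const_mul]; congr 1; funext x; field_simp; ring
    _ = (n + 1) * v * ∫ x, gaussianPDFReal 0 v x * x ^ n := by
        rw [hparts, neg_mul_neg, ← integral_const_mul, ← integral_const_mul]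
        congr 1; funext x; ring

-- For `k = 0` the truncated subtraction gives `(0 - 1)‼ = 0‼ = 1`.
lemma integral_pow_two_mul_gaussianReal (v : ℝ≥0) (k : ℕ) :
    ∫ x, x ^ (2 * k) ∂gaussianReal 0 v = v ^ k * (2 * k - 1)‼ := by
  induction k with
  | zero => simp
  | succ k ih =>
    rw [show 2 * (k + 1) = 2 * k + 2 by ring, integral_pow_add_two_gaussianReal, ih,
      show 2 * k + 2 - 1 = 2 * k + 1 by omega, Nat.doubleFactorial_add_one]
    rcases k with _ | k
    · simp
    · push_cast; ring

lemma abs_integral_log_cosh_mul_sub_le (s : ℝ) :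
    |∫ x, log (cosh (s * x)) ∂gaussianReal 0 1 - (s ^ 2 / 2 - s ^ 4 / 4)| ≤ s ^ 6 / 3 := by
  have hmom : ∀ k : ℕ, ∫ x, x ^ (2 * k) ∂gaussianReal 0 1 = (2 * k - 1)‼ := by
    simpa using integral_pow_two_mul_gaussianReal 1
  have hint : ∀ k : ℕ, ∀ c : ℝ, Integrable (fun x => c * x ^ (2 * k)) (gaussianReal 0 1) :=
    fun k c => (integrable_pow_gaussianReal 0 1 _).const_mul c
  have hlow_int : Integrable (fun x => s ^ 2 / 2 * x ^ (2 * 1) - s ^ 4 / 12 * x ^ (2 * 2))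
      (gaussianReal 0 1) := (hint 1 _).sub (hint 2 _)
  have hup_int : Integrable (fun x => s ^ 2 / 2 * x ^ (2 * 1) - s ^ 4 / 12 * x ^ (2 * 2)
      + s ^ 6 / 45 * x ^ (2 * 3)) (gaussianReal 0 1) := hlow_int.add (hint 3 _)
  have hlog_int : Integrable (fun x => log (cosh (s * x))) (gaussianReal 0 1) := by
    refine (hint 1 (s ^ 2 / 2)).mono'
      (by fun_prop : Measurable fun x => log (cosh (s * x))).aestronglyMeasurable
      (ae_of_all _ fun x => ?_)
    rw [norm_of_nonneg (log_nonneg (one_le_cosh _))]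
    linarith [log_cosh_le_sq_div_two (s * x)]
  have hlow : s ^ 2 / 2 - s ^ 4 / 4 ≤ ∫ x, log (cosh (s * x)) ∂gaussianReal 0 1 := by
    calc s ^ 2 / 2 - s ^ 4 / 4
        = ∫ x, (s ^ 2 / 2 * x ^ (2 * 1) - s ^ 4 / 12 * x ^ (2 * 2)) ∂gaussianReal 0 1 := by
          rw [integral_sub (hint 1 _) (hint 2 _), integral_const_mul, integral_const_mul,
            hmom, hmom]
          norm_num [Nat.doubleFactorial]; ring
      _ ≤ _ := integral_mono hlow_int hlog_int fun x => by
          linarith [log_cosh_lower_bound (s * x)]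
  have hup :
      ∫ x, log (cosh (s * x)) ∂gaussianReal 0 1 ≤ s ^ 2 / 2 - s ^ 4 / 4 + s ^ 6 / 3 := by
    calc ∫ x, log (cosh (s * x)) ∂gaussianReal 0 1
        ≤ ∫ x, (s ^ 2 / 2 * x ^ (2 * 1) - s ^ 4 / 12 * x ^ (2 * 2) + s ^ 6 / 45 * x ^ (2 * 3))
            ∂gaussianReal 0 1 := integral_mono hlog_int hup_int fun x => by
          linarith [log_cosh_upper_bound (s * x)]
      _ = _ := by
          rw [integral_add hlow_int (hint 3 _), integral_sub (hint 1 _) (hint 2 _),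
            integral_const_mul, integral_const_mul, integral_const_mul, hmom, hmom, hmom]
          norm_num [Nat.doubleFactorial]; ring
  rw [abs_le]
  constructor <;> nlinarith [pow_two_nonneg (s ^ 3)]

lemma tendsto_integral_log_cosh_sub_div_sq {s c : ℝ → ℝ} (hc : ContinuousAt c 0)
    (hs : ∀ q, 0 < q → s q ^ 2 = q * c q) :
    Tendsto (fun q => (∫ x, log (cosh (s q * x)) ∂gaussianReal 0 1
      - (s q ^ 2 / 2 - s q ^ 4 / 4)) / q ^ 2) (𝓝[>] 0) (𝓝 0) := by
  have hbound : Tendsto (fun q => q * c q ^ 3 / 3) (𝓝[>] 0) (𝓝 0) := by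
    have := ((continuousAt_id.mul (hc.pow 3)).div_const 3).tendsto
    simpa using this.mono_left nhdsWithin_le_nhds
  refine squeeze_zero_norm' ?_ hbound
  filter_upwards [self_mem_nhdsWithin] with q (hq : 0 < q)
  rw [norm_div, norm_pow, Real.norm_of_nonneg hq.le, Real.norm_eq_abs,
    div_le_iff₀ (by positivity)]
  calc _ ≤ s q ^ 6 / 3 := abs_integral_log_cosh_mul_sub_le (s q)
    _ = q * c q ^ 3 / 3 * q ^ 2 := by
      rw [show s q ^ 6 = (s q ^ 2) ^ 3 by ring, hs q hq]; ring

lemma hasDerivAt_mul_pow_div (C : ℝ) {p : ℕ} (hp : p ≠ 0) (r : ℝ) :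
    HasDerivAt (fun r => (C * r) ^ p / p) (C ^ p * r ^ (p - 1)) r := by
  refine ((((hasDerivAt_id' r).const_mul C).pow p).div_const (p : ℝ)).congr_deriv ?_
  obtain ⟨k, rfl⟩ := Nat.exists_eq_succ_of_ne_zero hp
  field_simp
  simp only [Nat.succ_eq_add_one, add_tsub_cancel_right, mul_pow]
  ring

theorem stmt_7_general (p : ℕ) (hp : 3 ≤ p) (C β : ℝ) (hC : 0 < C) :
    let ξ₀ : ℝ → ℝ := fun r => r ^ 2 / 2 + (C * r) ^ p / p
    let F : ℝ → ℝ := fun q =>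
      (∫ x, Real.log (Real.cosh (β * Real.sqrt (deriv ξ₀ q) * x)) ∂(gaussianReal 0 1))
        + β ^ 2 / 2 * (ξ₀ 1 - ξ₀ q - (1 - q) * deriv ξ₀ q)
    F 0 = β ^ 2 / 2 * ξ₀ 1 ∧
      Tendsto (fun q : ℝ =>
          (F q - β ^ 2 / 2 * ξ₀ 1 - β ^ 2 / 4 * (1 - β ^ 2) * q ^ 2) / q ^ 2)
        (nhdsWithin 0 (Set.Ioi 0)) (nhds 0) := by
  intro ξ₀ F
  obtain ⟨m, rfl⟩ : ∃ m, p = m + 3 := ⟨p - 3, by omega⟩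
  set K := C ^ (m + 3)
  have hξ : ∀ q, ξ₀ q = q ^ 2 / 2 + K * q ^ (m + 3) / (m + 3) := fun q => by
    simp only [ξ₀, K, mul_pow]; push_cast; ring
  have hξ' : ∀ q, deriv ξ₀ q = q * (1 + K * q ^ (m + 1)) := fun q => by
    rw [(((hasDerivAt_pow 2 q).div_const 2).fun_add
      (hasDerivAt_mul_pow_div C (by omega : m + 3 ≠ 0) q)).deriv]
    push_cast; ring
  refine ⟨by simp [F, hξ, hξ'], ?_⟩
  have hs : ∀ q, 0 < q → (β * √(deriv ξ₀ q)) ^ 2 = q * (β ^ 2 * (1 + K * q ^ (m + 1))) :=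
    fun q hq => by rw [mul_pow, sq_sqrt (by rw [hξ']; positivity), hξ']; ring
  have hrem := tendsto_integral_log_cosh_sub_div_sq
    (c := fun q => β ^ 2 * (1 + K * q ^ (m + 1))) (by fun_prop) hs
  -- the non-Gaussian part of the quotient, `(c₁ q^p + c₂ q^(2p-2)) / q²`
  have hpoly : Tendsto (fun q : ℝ => (β ^ 2 * K * (1 - 1 / (m + 3)) / 2 - β ^ 4 * K / 2)
      * q ^ (m + 1) - β ^ 4 * K ^ 2 / 4 * q ^ (2 * m + 2)) (𝓝[>] 0) (𝓝 0) := by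
    have := (by fun_prop : Continuous fun q : ℝ => (β ^ 2 * K * (1 - 1 / (m + 3)) / 2
      - β ^ 4 * K / 2) * q ^ (m + 1) - β ^ 4 * K ^ 2 / 4 * q ^ (2 * m + 2)).tendsto 0
    simpa using this.mono_left nhdsWithin_le_nhds
  have hsum := hrem.add hpoly
  rw [add_zero] at hsum
  refine hsum.congr' ?_
  filter_upwards [self_mem_nhdsWithin] with q (hq : 0 < q)
  rw [show (β * √(deriv ξ₀ q)) ^ 4 = ((β * √(deriv ξ₀ q)) ^ 2) ^ 2 by ring, hs q hq]
  simp only [F, hξ, hξ']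
  field_simp
  ring

/-- For `p ≥ 3`, `C > 0`, `β > 0`, `ξ₀ r = r²/2 + (C r)^p/p` and the RS functional
`F_RS(q,β) = E[log cosh(β √(ξ₀'(q)) Z)] + (β²/2)(ξ₀(1) - ξ₀(q) - (1-q) ξ₀'(q))`,
one has `F_RS(0,β) = (β²/2) ξ₀(1)` and, as `q → 0⁺`,
`F_RS(q,β) - F_RS(0,β) = (β²/4)(1-β²) q² + o(q²)`. -/
theorem stmt_7 (p : ℕ) (hp : 3 ≤ p) (C β : ℝ) (hC : 0 < C) (hβ : 0 < β) :
    let ξ₀ : ℝ → ℝ := fun r => r ^ 2 / 2 + (C * r) ^ p / p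
    let F : ℝ → ℝ := fun q =>
      (∫ x, Real.log (Real.cosh (β * Real.sqrt (deriv ξ₀ q) * x)) ∂(gaussianReal 0 1))
        + β ^ 2 / 2 * (ξ₀ 1 - ξ₀ q - (1 - q) * deriv ξ₀ q)
    F 0 = β ^ 2 / 2 * ξ₀ 1 ∧
      Tendsto (fun q : ℝ =>
          (F q - β ^ 2 / 2 * ξ₀ 1 - β ^ 2 / 4 * (1 - β ^ 2) * q ^ 2) / q ^ 2)
        (nhdsWithin 0 (Set.Ioi 0)) (nhds 0) :=
  stmt_7_general p hp C β hC
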